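/- A linear map φ : 𝔥₉ → 𝔥₉ is an automorphism of 𝔥₉ if and only if its matrix (a_{ij}) in the basis ê₁,…,ê₆ is lower triangular with a₁₁ ≠ 0, a₂₂ ≠ 0, a₄₄ ≠ 0 and satisfies: a₃₃ = a₁₁², a₅₃ = -a₁₁a₂₁, a₅₄ = 0, a₅₅ = a₁₁a₂₂, a₆₅ = a₂₂a₃₁ - a₂₁a₃₂ - a₁₁a₅₂, and a₆₆ = a₁₁²a₂₂ (all entries a_{ij} with i < j vanish and a₅₄ = 0, while a₂₁, a₃₁, a₃₂, a₄₁, a₄₂, a₄₃, a₅₁, a₅₂, a₆₁, a₆₂, a₆₃, a₆₄ are arbitrary). -/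
import Mathlib

open Matrix

/-- The Lie bracket of the nilpotent Lie algebra 𝔥₉ in the basis ê₁,…,ê₆: the only
nonzero brackets among basis vectors are [ê₁,ê₂] = ê₅ and [ê₁,ê₅] = [ê₂,ê₃] = -ê₆. -/
def h9bracket (x y : Fin 6 → ℝ) : Fin 6 → ℝ :=
  ![0, 0, 0, 0, x 0 * y 1 - x 1 * y 0,
    -((x 0 * y 4 - x 4 * y 0) + (x 1 * y 2 - x 2 * y 1))]

/-- An automorphism of 𝔥₉, identified with its matrix (a_{ij}) in the basis ê₁,…,ê₆
(the j-th column is φ(ê_j)). -/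
def IsAutH9 (f : Matrix (Fin 6) (Fin 6) ℝ) : Prop :=
  IsUnit f ∧ ∀ x y : Fin 6 → ℝ, f.mulVec (h9bracket x y) = h9bracket (f.mulVec x) (f.mulVec y)

section aux

lemma v6_0 {α : Type*} (a b c d e f : α) : ![a,b,c,d,e,f] 0 = a := rfl
lemma v6_1 {α : Type*} (a b c d e f : α) : ![a,b,c,d,e,f] 1 = b := rfl
lemma v6_2 {α : Type*} (a b c d e f : α) : ![a,b,c,d,e,f] 2 = c := rfl
lemma v6_3 {α : Type*} (a b c d e f : α) : ![a,b,c,d,e,f] 3 = d := rfl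
lemma v6_4 {α : Type*} (a b c d e f : α) : ![a,b,c,d,e,f] 4 = e := rfl
lemma v6_5 {α : Type*} (a b c d e f : α) : ![a,b,c,d,e,f] 5 = f := rfl

lemma cv_1_1 {α : Type*} (x : α) (u : Fin 1 → α) : vecCons x u 1 = u 0 := rfl
lemma cv_2_1 {α : Type*} (x : α) (u : Fin 2 → α) : vecCons x u 1 = u 0 := rfl
lemma cv_2_2 {α : Type*} (x : α) (u : Fin 2 → α) : vecCons x u 2 = u 1 := rfl
lemma cv_3_1 {α : Type*} (x : α) (u : Fin 3 → α) : vecCons x u 1 = u 0 := rfl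
lemma cv_3_2 {α : Type*} (x : α) (u : Fin 3 → α) : vecCons x u 2 = u 1 := rfl
lemma cv_3_3 {α : Type*} (x : α) (u : Fin 3 → α) : vecCons x u 3 = u 2 := rfl
lemma cv_4_1 {α : Type*} (x : α) (u : Fin 4 → α) : vecCons x u 1 = u 0 := rfl
lemma cv_4_2 {α : Type*} (x : α) (u : Fin 4 → α) : vecCons x u 2 = u 1 := rfl
lemma cv_4_3 {α : Type*} (x : α) (u : Fin 4 → α) : vecCons x u 3 = u 2 := rfl
lemma cv_4_4 {α : Type*} (x : α) (u : Fin 4 → α) : vecCons x u 4 = u 3 := rfl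
lemma cv_5_1 {α : Type*} (x : α) (u : Fin 5 → α) : vecCons x u 1 = u 0 := rfl
lemma cv_5_2 {α : Type*} (x : α) (u : Fin 5 → α) : vecCons x u 2 = u 1 := rfl
lemma cv_5_3 {α : Type*} (x : α) (u : Fin 5 → α) : vecCons x u 3 = u 2 := rfl
lemma cv_5_4 {α : Type*} (x : α) (u : Fin 5 → α) : vecCons x u 4 = u 3 := rfl
lemma cv_5_5 {α : Type*} (x : α) (u : Fin 5 → α) : vecCons x u 5 = u 4 := rfl
lemma cv0 {α : Type*} {n : ℕ} (x : α) (u : Fin n → α) : vecCons x u 0 = x := rfl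

lemma mulVec6 (f : Matrix (Fin 6) (Fin 6) ℝ) (x : Fin 6 → ℝ) (k : Fin 6) :
    f.mulVec x k = f k 0 * x 0 + f k 1 * x 1 + f k 2 * x 2 + f k 3 * x 3 + f k 4 * x 4
      + f k 5 * x 5 := by
  simp [Matrix.mulVec, dotProduct, Fin.sum_univ_six, add_assoc]

lemma br0 (x y : Fin 6 → ℝ) : h9bracket x y 0 = 0 := rfl
lemma br1 (x y : Fin 6 → ℝ) : h9bracket x y 1 = 0 := rfl
lemma br2 (x y : Fin 6 → ℝ) : h9bracket x y 2 = 0 := rfl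
lemma br3 (x y : Fin 6 → ℝ) : h9bracket x y 3 = 0 := rfl
lemma br4 (x y : Fin 6 → ℝ) : h9bracket x y 4 = x 0 * y 1 - x 1 * y 0 := rfl
lemma br5 (x y : Fin 6 → ℝ) : h9bracket x y 5 =
    -((x 0 * y 4 - x 4 * y 0) + (x 1 * y 2 - x 2 * y 1)) := rfl

lemma eta6 (M : Matrix (Fin 6) (Fin 6) ℝ) :
    M = !![M 0 0, M 0 1, M 0 2, M 0 3, M 0 4, M 0 5;
           M 1 0, M 1 1, M 1 2, M 1 3, M 1 4, M 1 5;
           M 2 0, M 2 1, M 2 2, M 2 3, M 2 4, M 2 5;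
           M 3 0, M 3 1, M 3 2, M 3 3, M 3 4, M 3 5;
           M 4 0, M 4 1, M 4 2, M 4 3, M 4 4, M 4 5;
           M 5 0, M 5 1, M 5 2, M 5 3, M 5 4, M 5 5] := by
  funext i j
  fin_cases i <;> fin_cases j <;> rfl

end aux

set_option maxHeartbeats 2000000 in
/-- Theorem 8.1: a linear map φ is an automorphism of 𝔥₉ if and only if its matrix in
the basis ê₁,…,ê₆ is lower triangular with a₁₁, a₂₂, a₄₄ ≠ 0 and satisfies
a₃₃ = a₁₁², a₅₃ = -a₁₁a₂₁, a₅₄ = 0, a₅₅ = a₁₁a₂₂, a₆₅ = a₂₂a₃₁ - a₂₁a₃₂ - a₁₁a₅₂ and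
a₆₆ = a₁₁²a₂₂, with the remaining lower-triangular entries arbitrary. -/
theorem aut_h9_iff_form (φ : Matrix (Fin 6) (Fin 6) ℝ) :
    IsAutH9 φ ↔
      ∃ (a11 a21 a22 a31 a32 a41 a42 a43 a44 a51 a52 a61 a62 a63 a64 : ℝ),
        a11 ≠ 0 ∧ a22 ≠ 0 ∧ a44 ≠ 0 ∧
        φ = !![a11, 0, 0, 0, 0, 0;
               a21, a22, 0, 0, 0, 0;
               a31, a32, a11 ^ 2, 0, 0, 0;
               a41, a42, a43, a44, 0, 0;
               a51, a52, -(a11 * a21), 0, a11 * a22, 0;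
               a61, a62, a63, a64, a22 * a31 - a21 * a32 - a11 * a52,
                 a11 ^ 2 * a22] := by
  constructor
  · rintro ⟨hU, hb⟩
    have hinj : Function.Injective φ.mulVec := mulVec_injective_iff_isUnit.mpr hU
    -- extract scalar equations
    have h04 : φ 0 4 = 0 := by
      have h := congrFun (hb ![1,0,0,0,0,0] ![0,1,0,0,0,0]) 0
      simp [mulVec6, br0, br1, br2, br3, br4, br5, v6_0, v6_1, v6_2, v6_3, v6_4, v6_5] at h
      linear_combination h
    have h14 : φ 1 4 = 0 := by
      have h := congrFun (hb ![1,0,0,0,0,0] ![0,1,0,0,0,0]) 1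
      simp [mulVec6, br0, br1, br2, br3, br4, br5, v6_0, v6_1, v6_2, v6_3, v6_4, v6_5] at h
      linear_combination h
    have h24 : φ 2 4 = 0 := by
      have h := congrFun (hb ![1,0,0,0,0,0] ![0,1,0,0,0,0]) 2
      simp [mulVec6, br0, br1, br2, br3, br4, br5, v6_0, v6_1, v6_2, v6_3, v6_4, v6_5] at h
      linear_combination h
    have h34 : φ 3 4 = 0 := by
      have h := congrFun (hb ![1,0,0,0,0,0] ![0,1,0,0,0,0]) 3
      simp [mulVec6, br0, br1, br2, br3, br4, br5, v6_0, v6_1, v6_2, v6_3, v6_4, v6_5] at h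
      linear_combination h
    have h44e : φ 4 4 = φ 0 0 * φ 1 1 - φ 1 0 * φ 0 1 := by
      have h := congrFun (hb ![1,0,0,0,0,0] ![0,1,0,0,0,0]) 4
      simp [mulVec6, br0, br1, br2, br3, br4, br5, v6_0, v6_1, v6_2, v6_3, v6_4, v6_5] at h
      linear_combination h
    have h54e : φ 5 4 =
        -((φ 0 0 * φ 4 1 - φ 4 0 * φ 0 1) + (φ 1 0 * φ 2 1 - φ 2 0 * φ 1 1)) := by
      have h := congrFun (hb ![1,0,0,0,0,0] ![0,1,0,0,0,0]) 5
      simp [mulVec6, br0, br1, br2, br3, br4, br5, v6_0, v6_1, v6_2, v6_3, v6_4, v6_5] at h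
      linear_combination h
    have h05 : φ 0 5 = 0 := by
      have h := congrFun (hb ![1,0,0,0,0,0] ![0,0,0,0,1,0]) 0
      simp [mulVec6, br0, br1, br2, br3, br4, br5, v6_0, v6_1, v6_2, v6_3, v6_4, v6_5] at h
      linear_combination h
    have h15 : φ 1 5 = 0 := by
      have h := congrFun (hb ![1,0,0,0,0,0] ![0,0,0,0,1,0]) 1
      simp [mulVec6, br0, br1, br2, br3, br4, br5, v6_0, v6_1, v6_2, v6_3, v6_4, v6_5] at h
      linear_combination h
    have h25 : φ 2 5 = 0 := by
      have h := congrFun (hb ![1,0,0,0,0,0] ![0,0,0,0,1,0]) 2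
      simp [mulVec6, br0, br1, br2, br3, br4, br5, v6_0, v6_1, v6_2, v6_3, v6_4, v6_5] at h
      linear_combination h
    have h35 : φ 3 5 = 0 := by
      have h := congrFun (hb ![1,0,0,0,0,0] ![0,0,0,0,1,0]) 3
      simp [mulVec6, br0, br1, br2, br3, br4, br5, v6_0, v6_1, v6_2, v6_3, v6_4, v6_5] at h
      linear_combination h
    have h45e : φ 4 5 = -(φ 0 0 * φ 1 4 - φ 1 0 * φ 0 4) := by
      have h := congrFun (hb ![1,0,0,0,0,0] ![0,0,0,0,1,0]) 4
      simp [mulVec6, br0, br1, br2, br3, br4, br5, v6_0, v6_1, v6_2, v6_3, v6_4, v6_5] at h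
      linear_combination -h
    have h55e : φ 5 5 =
        (φ 0 0 * φ 4 4 - φ 4 0 * φ 0 4) + (φ 1 0 * φ 2 4 - φ 2 0 * φ 1 4) := by
      have h := congrFun (hb ![1,0,0,0,0,0] ![0,0,0,0,1,0]) 5
      simp [mulVec6, br0, br1, br2, br3, br4, br5, v6_0, v6_1, v6_2, v6_3, v6_4, v6_5] at h
      linear_combination -h
    have h45 : φ 4 5 = 0 := by rw [h45e, h04, h14]; ring
    have h55v : φ 5 5 = φ 0 0 * φ 4 4 := by
      rw [h55e, h04, h14, h24]; ring
    have hC4 : φ 0 1 * φ 1 2 - φ 1 1 * φ 0 2 = 0 := by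
      have h := congrFun (hb ![0,1,0,0,0,0] ![0,0,1,0,0,0]) 4
      simp [mulVec6, br0, br1, br2, br3, br4, br5, v6_0, v6_1, v6_2, v6_3, v6_4, v6_5] at h
      linear_combination -h - h45
    have hC5 : φ 5 5 =
        (φ 0 1 * φ 4 2 - φ 4 1 * φ 0 2) + (φ 1 1 * φ 2 2 - φ 2 1 * φ 1 2) := by
      have h := congrFun (hb ![0,1,0,0,0,0] ![0,0,1,0,0,0]) 5
      simp [mulVec6, br0, br1, br2, br3, br4, br5, v6_0, v6_1, v6_2, v6_3, v6_4, v6_5] at h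
      linear_combination -h
    have F02 : φ 0 0 * φ 1 2 - φ 1 0 * φ 0 2 = 0 := by
      have h := congrFun (hb ![1,0,0,0,0,0] ![0,0,1,0,0,0]) 4
      simp [mulVec6, br0, br1, br2, br3, br4, br5, v6_0, v6_1, v6_2, v6_3, v6_4, v6_5] at h
      linear_combination -h
    have F03 : φ 0 0 * φ 1 3 - φ 1 0 * φ 0 3 = 0 := by
      have h := congrFun (hb ![1,0,0,0,0,0] ![0,0,0,1,0,0]) 4
      simp [mulVec6, br0, br1, br2, br3, br4, br5, v6_0, v6_1, v6_2, v6_3, v6_4, v6_5] at h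
      linear_combination -h
    have F13 : φ 0 1 * φ 1 3 - φ 1 1 * φ 0 3 = 0 := by
      have h := congrFun (hb ![0,1,0,0,0,0] ![0,0,0,1,0,0]) 4
      simp [mulVec6, br0, br1, br2, br3, br4, br5, v6_0, v6_1, v6_2, v6_3, v6_4, v6_5] at h
      linear_combination -h
    have G02 : (φ 0 0 * φ 4 2 - φ 4 0 * φ 0 2) + (φ 1 0 * φ 2 2 - φ 2 0 * φ 1 2) = 0 := by
      have h := congrFun (hb ![1,0,0,0,0,0] ![0,0,1,0,0,0]) 5
      simp [mulVec6, br0, br1, br2, br3, br4, br5, v6_0, v6_1, v6_2, v6_3, v6_4, v6_5] at h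
      linear_combination h
    have G03 : (φ 0 0 * φ 4 3 - φ 4 0 * φ 0 3) + (φ 1 0 * φ 2 3 - φ 2 0 * φ 1 3) = 0 := by
      have h := congrFun (hb ![1,0,0,0,0,0] ![0,0,0,1,0,0]) 5
      simp [mulVec6, br0, br1, br2, br3, br4, br5, v6_0, v6_1, v6_2, v6_3, v6_4, v6_5] at h
      linear_combination h
    have G13 : (φ 0 1 * φ 4 3 - φ 4 1 * φ 0 3) + (φ 1 1 * φ 2 3 - φ 2 1 * φ 1 3) = 0 := by
      have h := congrFun (hb ![0,1,0,0,0,0] ![0,0,0,1,0,0]) 5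
      simp [mulVec6, br0, br1, br2, br3, br4, br5, v6_0, v6_1, v6_2, v6_3, v6_4, v6_5] at h
      linear_combination h
    have G14 : (φ 0 1 * φ 4 4 - φ 4 1 * φ 0 4) + (φ 1 1 * φ 2 4 - φ 2 1 * φ 1 4) = 0 := by
      have h := congrFun (hb ![0,1,0,0,0,0] ![0,0,0,0,1,0]) 5
      simp [mulVec6, br0, br1, br2, br3, br4, br5, v6_0, v6_1, v6_2, v6_3, v6_4, v6_5] at h
      linear_combination h
    -- nondegeneracy of φ 5 5
    have h55ne : φ 5 5 ≠ 0 := by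
      intro h0
      have hc5 : ∀ k : Fin 6, φ k 5 = 0 := by
        intro k
        fin_cases k
        · exact h05
        · exact h15
        · exact h25
        · exact h35
        · exact h45
        · exact h0
      have hz : φ.mulVec ![0,0,0,0,0,1] = φ.mulVec 0 := by
        rw [Matrix.mulVec_zero]
        funext k
        rw [mulVec6]
        simp [v6_0, v6_1, v6_2, v6_3, v6_4, v6_5, hc5 k]
      have := congrFun (hinj hz) 5
      simp [v6_5] at this
    have h00ne : φ 0 0 ≠ 0 := fun h => h55ne (by rw [h55v, h, zero_mul])
    have h44ne : φ 4 4 ≠ 0 := fun h => h55ne (by rw [h55v, h, mul_zero])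
    have h01 : φ 0 1 = 0 := by
      have hz : φ 0 1 * φ 4 4 = 0 := by
        linear_combination G14 + φ 4 1 * h04 - φ 1 1 * h24 + φ 2 1 * h14
      exact (mul_eq_zero.mp hz).resolve_right h44ne
    have h44v : φ 4 4 = φ 0 0 * φ 1 1 := by rw [h44e, h01]; ring
    have h11ne : φ 1 1 ≠ 0 := fun h => h44ne (by rw [h44v, h, mul_zero])
    have h02 : φ 0 2 = 0 := by
      have hz : φ 1 1 * φ 0 2 = 0 := by
        linear_combination -hC4 + φ 1 2 * h01
      exact (mul_eq_zero.mp hz).resolve_left h11ne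
    have h12 : φ 1 2 = 0 := by
      have hz : φ 0 0 * φ 1 2 = 0 := by
        linear_combination F02 + φ 1 0 * h02
      exact (mul_eq_zero.mp hz).resolve_left h00ne
    have h03 : φ 0 3 = 0 := by
      have hz : φ 1 1 * φ 0 3 = 0 := by
        linear_combination -F13 + φ 1 3 * h01
      exact (mul_eq_zero.mp hz).resolve_left h11ne
    have h13 : φ 1 3 = 0 := by
      have hz : φ 0 0 * φ 1 3 = 0 := by
        linear_combination F03 + φ 1 0 * h03
      exact (mul_eq_zero.mp hz).resolve_left h00ne
    have h22 : φ 2 2 = φ 0 0 ^ 2 := by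
      have hz : φ 1 1 * (φ 2 2 - φ 0 0 ^ 2) = 0 := by
        linear_combination -hC5 + h55v + φ 0 0 * h44v + (-(φ 4 2)) * h01 + φ 4 1 * h02
          + φ 2 1 * h12
      have := (mul_eq_zero.mp hz).resolve_left h11ne
      linarith
    have h42 : φ 4 2 = -(φ 0 0 * φ 1 0) := by
      have hz : φ 0 0 * (φ 4 2 + φ 0 0 * φ 1 0) = 0 := by
        linear_combination G02 + φ 4 0 * h02 + φ 2 0 * h12 - φ 1 0 * h22
      have := (mul_eq_zero.mp hz).resolve_left h00ne
      linarith
    have h23 : φ 2 3 = 0 := by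
      have hz : φ 1 1 * φ 2 3 = 0 := by
        linear_combination G13 - φ 4 3 * h01 + φ 4 1 * h03 + φ 2 1 * h13
      exact (mul_eq_zero.mp hz).resolve_left h11ne
    have h43 : φ 4 3 = 0 := by
      have hz : φ 0 0 * φ 4 3 = 0 := by
        linear_combination G03 + φ 4 0 * h03 - φ 1 0 * h23 + φ 2 0 * h13
      exact (mul_eq_zero.mp hz).resolve_left h00ne
    have h33ne : φ 3 3 ≠ 0 := by
      intro h0
      have key : ∀ k : Fin 6, φ k 3 * -(φ 5 5) + φ k 5 * φ 5 3 = 0 := by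
        have k0 : φ 0 3 * -(φ 5 5) + φ 0 5 * φ 5 3 = 0 := by rw [h03, h05]; ring
        have k1 : φ 1 3 * -(φ 5 5) + φ 1 5 * φ 5 3 = 0 := by rw [h13, h15]; ring
        have k2 : φ 2 3 * -(φ 5 5) + φ 2 5 * φ 5 3 = 0 := by rw [h23, h25]; ring
        have k3 : φ 3 3 * -(φ 5 5) + φ 3 5 * φ 5 3 = 0 := by rw [h0, h35]; ring
        have k4 : φ 4 3 * -(φ 5 5) + φ 4 5 * φ 5 3 = 0 := by rw [h43, h45]; ring
        have k5 : φ 5 3 * -(φ 5 5) + φ 5 5 * φ 5 3 = 0 := by ring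
        intro k
        fin_cases k
        · exact k0
        · exact k1
        · exact k2
        · exact k3
        · exact k4
        · exact k5
      have hz : φ.mulVec ![0,0,0,-(φ 5 5),0,φ 5 3] = φ.mulVec 0 := by
        rw [Matrix.mulVec_zero]
        funext k
        rw [mulVec6]
        simp only [v6_0, v6_1, v6_2, v6_3, v6_4, v6_5, Pi.zero_apply,
          mul_zero, add_zero, zero_add]
        linear_combination key k
      have := congrFun (hinj hz) 3
      simp [v6_3] at this
      exact h55ne this
    -- the remaining dictionary values
    have h54v : φ 5 4 = φ 1 1 * φ 2 0 - φ 1 0 * φ 2 1 - φ 0 0 * φ 4 1 := by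
      rw [h54e, h01]; ring
    have h55vv : φ 5 5 = φ 0 0 ^ 2 * φ 1 1 := by rw [h55v, h44v]; ring
    refine ⟨φ 0 0, φ 1 0, φ 1 1, φ 2 0, φ 2 1, φ 3 0, φ 3 1, φ 3 2, φ 3 3,
      φ 4 0, φ 4 1, φ 5 0, φ 5 1, φ 5 2, φ 5 3, h00ne, h11ne, h33ne, ?_⟩
    conv_lhs => rw [eta6 φ]
    rw [h01, h02, h03, h04, h05, h12, h13, h14, h15, h22, h23, h24, h25, h34, h35,
      h42, h43, h44v, h45, h54v, h55vv]
  · rintro ⟨a11, a21, a22, a31, a32, a41, a42, a43, a44, a51, a52, a61, a62, a63, a64,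
      ha, hb, hd, hφ⟩
    subst hφ
    constructor
    · rw [Matrix.isUnit_iff_isUnit_det]
      have htri : Matrix.BlockTriangular
          (!![a11, 0, 0, 0, 0, 0;
               a21, a22, 0, 0, 0, 0;
               a31, a32, a11 ^ 2, 0, 0, 0;
               a41, a42, a43, a44, 0, 0;
               a51, a52, -(a11 * a21), 0, a11 * a22, 0;
               a61, a62, a63, a64, a22 * a31 - a21 * a32 - a11 * a52,
                 a11 ^ 2 * a22]) OrderDual.toDual := by
        intro i j hij
        fin_cases i <;> fin_cases j <;> first | rfl | exact absurd hij (by decide)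
      rw [Matrix.det_of_lowerTriangular _ htri, Fin.prod_univ_six]
      refine isUnit_iff_ne_zero.mpr ?_
      show a11 * a22 * a11 ^ 2 * a44 * (a11 * a22) * (a11 ^ 2 * a22) ≠ 0
      exact mul_ne_zero (mul_ne_zero (mul_ne_zero (mul_ne_zero (mul_ne_zero ha hb)
        (pow_ne_zero _ ha)) hd) (mul_ne_zero ha hb)) (mul_ne_zero (pow_ne_zero _ ha) hb)
    · intro x y
      funext k
      fin_cases k <;>
        simp [h9bracket, Matrix.mulVec, dotProduct, Fin.sum_univ_six,
          v6_0, v6_1, v6_2, v6_3, v6_4, v6_5, cv_1_1, cv_2_1, cv_2_2, cv_3_1, cv_3_2,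
          cv_3_3, cv_4_1, cv_4_2, cv_4_3, cv_4_4, cv_5_1, cv_5_2, cv_5_3, cv_5_4,
          cv_5_5, cv0] <;> ring
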